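/- arXiv:2210.12456 — 5 statements merged into one kernel-verified Lean document; each statement's English description precedes it below -/
import Mathlib

section
/- If X ⊆ ℝ^k is a set all of whose elements are one-hot tiers, then γ^{OH_k}(a^X) = X; that is, the abstract value a^X precisely represents X without any loss of precision. -/
/-- The flat constant-propagation domain CP = ℝ ∪ {⊥, ⊤}. -/
inductive CP where
  | bot : CP
  | top : CP
  | val : ℝ → CP

/-- The flat partial order on CP: ⊥ ⊑ z ⊑ ⊤ for every z ∈ ℝ,
    distinct reals incomparable. -/
def CP.le : CP → CP → Prop
  | .bot, _ => True
  | _, .top => True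
  | .val x, .val y => x = y
  | _, _ => False

/-- Concretization of CP. -/
def gammaCP : CP → Set ℝ
  | .bot => ∅
  | .top => Set.univ
  | .val z => {z}

open Classical in
/-- Best abstraction of a set of reals in CP. -/
noncomputable def alphaCP (X : Set ℝ) : CP :=
  if X = ∅ then .bot
  else if h : ∃ z : ℝ, X = {z} then .val h.choose
  else .top

/-- Abstract counterpart on CP of a function f : ℝ → ℝ. -/
def fCP (f : ℝ → ℝ) : CP → CP
  | .bot => .bot
  | .top => .top
  | .val z => .val (f z)

/-- The one-hot abstract domain OH_k = (CP × CP)^k. -/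
def OH (k : ℕ) : Type := Fin k → CP × CP

/-- γ̂_i(a): concrete vectors whose i-th component was originally true. -/
def gammaHat {k : ℕ} (i : Fin k) (a : OH k) : Set (Fin k → ℝ) :=
  {x | x i ∈ gammaCP (a i).2 ∧ ∀ j : Fin k, j ≠ i → x j ∈ gammaCP (a j).1}

/-- Concretization of the one-hot abstract domain. -/
def gammaOH {k : ℕ} (a : OH k) : Set (Fin k → ℝ) :=
  ⋃ i : Fin k, gammaHat i a

/-- The one-hot tier with 1 in position i and 0 elsewhere. -/
def oneHot {k : ℕ} (i : Fin k) : Fin k → ℝ := fun j => if j = i then 1 else 0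

/-- A vector is a one-hot tier if it has exactly one index set to 1 and 0 elsewhere. -/
def IsOneHotTier {k : ℕ} (x : Fin k → ℝ) : Prop :=
  ∃! i : Fin k, x i = 1 ∧ ∀ j : Fin k, j ≠ i → x j = 0

/-- The abstract value a^X associated to a set X of one-hot tiers. -/
noncomputable def aX {k : ℕ} (X : Set (Fin k → ℝ)) : OH k :=
  fun i => (alphaCP ((fun x => x i) '' {x ∈ X | x i = 0}),
            alphaCP ((fun x => x i) '' {x ∈ X | x i = 1}))

/-- Abstract counterpart on OH_k of a function f : ℝ → ℝ. -/
def fOH {k : ℕ} (f : ℝ → ℝ) (a : OH k) : OH k :=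
  fun i => (fCP f (a i).1, fCP f (a i).2)

/-- An abstract value of OH_k is top-less when no ⊤ component occurs. -/
def TopLess {k : ℕ} (a : OH k) : Prop :=
  ∀ i : Fin k, (a i).1 ≠ CP.top ∧ (a i).2 ≠ CP.top


lemma alphaCP_eq_val {S : Set ℝ} {c : ℝ} (hne : S.Nonempty) (hsub : S ⊆ {c}) :
    alphaCP S = .val c := by
  have hS : S = {c} := by
    apply Set.Subset.antisymm hsub
    obtain ⟨y, hy⟩ := hne
    have hyc : y = c := hsub hy
    subst hyc
    exact Set.singleton_subset_iff.mpr hy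
  subst hS
  have h : ∃ z : ℝ, ({c} : Set ℝ) = {z} := ⟨c, rfl⟩
  have hc : h.choose = c := (Set.singleton_eq_singleton_iff.mp h.choose_spec).symm
  rw [alphaCP, if_neg (Set.singleton_ne_empty c), dif_pos h, hc]

/-- Theorem (precise representation of one-hot sets): if every element of
    X ⊆ ℝ^k is a one-hot tier, then γ^{OH_k}(a^X) = X. -/
theorem oh_aX_precise {k : ℕ} (X : Set (Fin k → ℝ))
    (hX : ∀ x ∈ X, IsOneHotTier x) :
    gammaOH (aX X) = X := by
  ext x
  simp only [gammaOH, Set.mem_iUnion]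
  constructor
  · rintro ⟨i, hxi, hxj⟩
    by_cases hne : ∃ y ∈ X, y i = 1
    · obtain ⟨y, hyX, hyi⟩ := hne
      have h2 : (aX X i).2 = .val 1 := by
        refine alphaCP_eq_val (S := (fun x => x i) '' {x ∈ X | x i = 1}) ⟨1, ⟨y, ⟨hyX, hyi⟩, hyi⟩⟩ ?_
        rintro _ ⟨z, ⟨hz, hz1⟩, rfl⟩; exact hz1
      rw [h2] at hxi
      have hxi1 : x i = 1 := hxi
      obtain ⟨i', ⟨hyi', hyj'⟩, _⟩ := hX y hyX
      have hii : i' = i := by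
        by_contra h
        have := hyj' i (fun hh => h hh.symm)
        rw [this] at hyi; exact zero_ne_one hyi
      subst hii
      have hxy : x = y := by
        funext j
        by_cases hj : j = i'
        · subst hj; rw [hxi1, hyi']
        · have hy0 : y j = 0 := hyj' j hj
          have h1 : (aX X j).1 = .val 0 := by
            refine alphaCP_eq_val (S := (fun x => x j) '' {x ∈ X | x j = 0}) ⟨0, ⟨y, ⟨hyX, hy0⟩, hy0⟩⟩ ?_
            rintro _ ⟨z, ⟨hz, hz0⟩, rfl⟩; exact hz0
          have := hxj j hj
          rw [h1] at this
          have hx0 : x j = 0 := this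
          rw [hx0, hy0]
      rw [hxy]; exact hyX
    · push_neg at hne
      have hemp : ((fun x => x i) '' {x ∈ X | x i = 1}) = ∅ := by
        ext z
        simp only [Set.mem_image, Set.mem_setOf_eq, Set.mem_empty_iff_false, iff_false,
          not_exists]
        rintro w ⟨⟨hw, hw1⟩, rfl⟩
        exact hne w hw hw1
      have h2 : (aX X i).2 = .bot := by
        show alphaCP _ = _
        rw [hemp, alphaCP, if_pos rfl]
      rw [h2] at hxi
      exact hxi.elim
  · intro hxX
    obtain ⟨i, ⟨hxi, hxj⟩, _⟩ := hX x hxX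
    refine ⟨i, ?_, ?_⟩
    · have h2 : (aX X i).2 = .val 1 := by
        refine alphaCP_eq_val (S := (fun x => x i) '' {x ∈ X | x i = 1}) ⟨1, ⟨x, ⟨hxX, hxi⟩, hxi⟩⟩ ?_
        rintro _ ⟨z, ⟨hz, hz1⟩, rfl⟩; exact hz1
      rw [h2]; exact hxi
    · intro j hj
      have h1 : (aX X j).1 = .val 0 := by
        refine alphaCP_eq_val (S := (fun x => x j) '' {x ∈ X | x j = 0}) ⟨0, ⟨x, ⟨hxX, hxj j hj⟩, hxj j hj⟩⟩ ?_
        rintro _ ⟨z, ⟨hz, hz0⟩, rfl⟩; exact hz0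
      rw [h1]; exact hxj j hj
end

section
/- Let X ⊆ ℝ^k be a set all of whose elements are one-hot tiers, and for i ∈ {1,…,k} let e_i ∈ ℝ^k denote the one-hot tier with 1 in position i and 0 elsewhere. Then for every i: if e_i ∈ X then γ̂_i(a^X) = {e_i}, and if e_i ∉ X then γ̂_i(a^X) = ∅. -/
/-! Since a one-hot tier is determined by the position of its `1`, the true component of
`a^X` at `i` is `1` if `e_i ∈ X` and `⊥` otherwise; and if `e_i ∈ X`, it contributes a `0` that
makes every false component `0`. So `γ̂_i(a^X)` is either `{x | x_i = 1, x_j = 0 for j ≠ i}`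
or empty. -/

lemma alphaCP_empty : alphaCP ∅ = .bot := by
  simp [alphaCP]

lemma alphaCP_singleton (z : ℝ) : alphaCP {z} = .val z := by
  have hz : ∃ w : ℝ, ({z} : Set ℝ) = {w} := ⟨z, rfl⟩
  rw [alphaCP, if_neg (Set.singleton_ne_empty z), dif_pos hz]
  exact congrArg CP.val (Set.singleton_eq_singleton_iff.mp hz.choose_spec).symm

lemma gammaCP_val (z : ℝ) : gammaCP (.val z) = {z} := rfl

lemma oneHot_apply_self {k : ℕ} (i : Fin k) : oneHot i i = 1 := by
  simp [oneHot]

lemma oneHot_apply_of_ne {k : ℕ} {i j : Fin k} (h : j ≠ i) : oneHot i j = 0 := by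
  simp [oneHot, h]

lemma IsOneHotTier.eq_oneHot {k : ℕ} {x : Fin k → ℝ} (hx : IsOneHotTier x) {i : Fin k}
    (hi : x i = 1) : x = oneHot i := by
  obtain ⟨j, ⟨hj, hzero⟩, -⟩ := hx
  obtain rfl : i = j := by
    by_contra hne
    exact one_ne_zero (hi ▸ hzero i hne)
  funext m
  by_cases hm : m = i
  · rw [hm, hj, oneHot_apply_self]
  · rw [hzero m hm, oneHot_apply_of_ne hm]

lemma image_setOf_eq_singleton {α β : Type*} {f : α → β} {S : Set α} {c : β}
    (h : ∃ x ∈ S, f x = c) : f '' {x ∈ S | f x = c} = {c} := by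
  obtain ⟨x, hxS, hx⟩ := h
  refine Set.eq_singleton_iff_unique_mem.mpr ⟨⟨x, ⟨hxS, hx⟩, hx⟩, ?_⟩
  rintro _ ⟨y, ⟨-, hy⟩, rfl⟩
  exact hy

lemma aX_snd_of_oneHot_mem {k : ℕ} {X : Set (Fin k → ℝ)} {i : Fin k} (hi : oneHot i ∈ X) :
    (aX X i).2 = .val 1 := by
  simp only [aX]
  rw [image_setOf_eq_singleton ⟨oneHot i, hi, oneHot_apply_self i⟩, alphaCP_singleton]

lemma aX_fst_of_oneHot_mem {k : ℕ} {X : Set (Fin k → ℝ)} {i j : Fin k} (hi : oneHot i ∈ X)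
    (hj : j ≠ i) : (aX X j).1 = .val 0 := by
  simp only [aX]
  rw [image_setOf_eq_singleton ⟨oneHot i, hi, oneHot_apply_of_ne hj⟩, alphaCP_singleton]

lemma aX_snd_of_oneHot_notMem {k : ℕ} {X : Set (Fin k → ℝ)} (hX : ∀ x ∈ X, IsOneHotTier x)
    {i : Fin k} (hi : oneHot i ∉ X) : (aX X i).2 = .bot := by
  have hempty : {x ∈ X | x i = 1} = ∅ :=
    Set.eq_empty_of_forall_notMem fun x ⟨hxX, hxi⟩ => hi ((hX x hxX).eq_oneHot hxi ▸ hxX)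
  simp only [aX]
  rw [hempty, Set.image_empty, alphaCP_empty]

lemma gammaHat_eq_singleton_oneHot {k : ℕ} {a : OH k} {i : Fin k} (hi : (a i).2 = .val 1)
    (hj : ∀ j, j ≠ i → (a j).1 = .val 0) : gammaHat i a = {oneHot i} := by
  ext x
  simp only [gammaHat, Set.mem_ofPred_eq, Set.mem_singleton_iff, hi, gammaCP_val]
  constructor
  · rintro ⟨hxi, hxj⟩
    funext m
    by_cases hm : m = i
    · rw [hm, hxi, oneHot_apply_self]
    · simpa [hj m hm, gammaCP_val, oneHot_apply_of_ne hm] using hxj m hm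
  · rintro rfl
    exact ⟨oneHot_apply_self i, fun j hji => by rw [hj j hji, oneHot_apply_of_ne hji]; rfl⟩

lemma gammaHat_eq_empty_of_snd_eq_bot {k : ℕ} {a : OH k} {i : Fin k} (hi : (a i).2 = .bot) :
    gammaHat i a = ∅ :=
  Set.eq_empty_of_forall_notMem fun _ ⟨hxi, _⟩ => by rwa [hi] at hxi

/-- Theorem: for a set X of one-hot tiers and every i,
    γ̂_i(a^X) = {e_i} if e_i ∈ X, and γ̂_i(a^X) = ∅ if e_i ∉ X. -/
theorem gammaHat_aX {k : ℕ} (X : Set (Fin k → ℝ))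
    (hX : ∀ x ∈ X, IsOneHotTier x) :
    ∀ i : Fin k,
      (oneHot i ∈ X → gammaHat i (aX X) = {oneHot i}) ∧
      (oneHot i ∉ X → gammaHat i (aX X) = (∅ : Set (Fin k → ℝ))) := by
  intro i
  constructor
  · intro hi
    exact gammaHat_eq_singleton_oneHot (aX_snd_of_oneHot_mem hi) fun _ => aX_fst_of_oneHot_mem hi
  · intro hi
    exact gammaHat_eq_empty_of_snd_eq_bot (aX_snd_of_oneHot_notMem hX hi)
end

section
/- For every function f : ℝ → ℝ, every k ≥ 1, and every abstract value a ∈ OH_k, it holds that f(γ^{OH_k}(a)) ⊆ γ^{OH_k}(f^OH(a)); that is, f^OH is a sound approximation of f on the one-hot abstract domain. -/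
lemma mem_fCP {f : ℝ → ℝ} {c : CP} {x : ℝ} (h : x ∈ gammaCP c) :
    f x ∈ gammaCP (fCP f c) := by
  cases c with
  | bot => exact absurd h (Set.notMem_empty x)
  | top => trivial
  | val z => simp_all [gammaCP, fCP]

/-- Theorem (soundness of f^OH): for every f : ℝ → ℝ, every k ≥ 1 and every
    a ∈ OH_k, f(γ^{OH_k}(a)) ⊆ γ^{OH_k}(f^OH(a)), where f acts componentwise
    on vectors and elementwise on sets of vectors. -/
theorem fOH_sound {k : ℕ} (hk : 1 ≤ k) (f : ℝ → ℝ) (a : OH k) :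
    (fun x : Fin k → ℝ => f ∘ x) '' gammaOH a ⊆ gammaOH (fOH f a) := by
  rintro _ ⟨x, hx, rfl⟩
  obtain ⟨i, hi⟩ := Set.mem_iUnion.mp hx
  refine Set.mem_iUnion.mpr ⟨i, ?_, fun j hj => ?_⟩
  · exact mem_fCP hi.1
  · exact mem_fCP (hi.2 j hj)
end

section
/- For every function f : ℝ → ℝ, every k ≥ 1, and every top-less abstract value a ∈ OH_k, it holds that f(γ^{OH_k}(a)) = γ^{OH_k}(f^OH(a)); that is, f^OH is a complete abstraction of f on top-less abstract values. -/
/-!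
Every `γ̂_i(a)` is a box `∏_j γ^CP(c_j)`, and the componentwise map `x ↦ f ∘ x` sends a box to
the box of the images. Away from `⊤`, each `γ^CP(c)` is empty or a singleton, so
`f(γ^CP(c)) = γ^CP(f^CP(c))` exactly; images also commute with the union defining `γ^{OH_k}`.
-/

open Set

lemma image_gammaCP (f : ℝ → ℝ) {c : CP} (hc : c ≠ CP.top) :
    f '' gammaCP c = gammaCP (fCP f c) := by
  cases c with
  | bot => simp [gammaCP, fCP]
  | top => exact absurd rfl hc
  | val z => simp [gammaCP, fCP]

/-- The constraint that `gammaHat i a` places on coordinate `j`. -/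
def hatComponent {k : ℕ} (i : Fin k) (a : OH k) (j : Fin k) : CP :=
  if j = i then (a j).2 else (a j).1

lemma gammaHat_eq_pi {k : ℕ} (i : Fin k) (a : OH k) :
    gammaHat i a = univ.pi fun j => gammaCP (hatComponent i a j) := by
  ext x
  simp only [gammaHat, hatComponent, mem_ofPred_eq, mem_univ_pi]
  constructor
  · rintro ⟨hxi, hxj⟩ j
    split_ifs with hji
    · exact hji ▸ hxi
    · exact hxj j hji
  · intro hx
    refine ⟨by simpa using hx i, fun j hji => ?_⟩
    simpa [hji] using hx j

lemma hatComponent_fOH {k : ℕ} (f : ℝ → ℝ) (i : Fin k) (a : OH k) (j : Fin k) :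
    hatComponent i (fOH f a) j = fCP f (hatComponent i a j) := by
  unfold hatComponent fOH
  split_ifs <;> rfl

lemma TopLess.hatComponent_ne_top {k : ℕ} {a : OH k} (ha : TopLess a) (i j : Fin k) :
    hatComponent i a j ≠ CP.top := by
  unfold hatComponent
  split_ifs
  exacts [(ha j).2, (ha j).1]

lemma image_gammaHat {k : ℕ} (f : ℝ → ℝ) {a : OH k} (ha : TopLess a) (i : Fin k) :
    Pi.map (fun _ => f) '' gammaHat i a = gammaHat i (fOH f a) := by
  simp only [gammaHat_eq_pi, piMap_image_univ_pi, hatComponent_fOH,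
    image_gammaCP f (ha.hatComponent_ne_top i _)]

theorem fOH_complete_general {k : ℕ} (f : ℝ → ℝ) (a : OH k)
    (ha : TopLess a) :
    (fun x : Fin k → ℝ => f ∘ x) '' gammaOH a = gammaOH (fOH f a) := by
  change Pi.map (fun _ => f) '' _ = _
  simp only [gammaOH, image_iUnion, image_gammaHat f ha]

/-- Theorem (completeness of f^OH on top-less values): for every f : ℝ → ℝ,
    every k ≥ 1 and every top-less a ∈ OH_k,
    f(γ^{OH_k}(a)) = γ^{OH_k}(f^OH(a)). -/
theorem fOH_complete {k : ℕ} (hk : 1 ≤ k) (f : ℝ → ℝ) (a : OH k)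
    (ha : TopLess a) :
    (fun x : Fin k → ℝ => f ∘ x) '' gammaOH a = gammaOH (fOH f a) :=
  fOH_complete_general f a ha
end

section
/- The abstract evaluation of a linear expression over a hyperrectangle is exact: let w ∈ ℝ^n, b ∈ ℝ, c ∈ ℝ^n, and r ∈ ℝ^n with r_i ≥ 0 for all i, and let B = ∏_{i=1}^n [c_i − r_i, c_i + r_i]. Then {b + Σ_{i=1}^n w_i x_i | x ∈ B} = [b + Σ_{i=1}^n w_i c_i − Σ_{i=1}^n |w_i| r_i, b + Σ_{i=1}^n w_i c_i + Σ_{i=1}^n |w_i| r_i]. In particular, linear operations admit a complete approximation on the reduced affine form abstraction of a hyperrectangle, whose concretization interval is exactly the right-hand side. -/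
/-- Theorem (exact abstract evaluation of a linear expression over a
    hyperrectangle): for w ∈ ℝ^n, b ∈ ℝ, center c ∈ ℝ^n and radii r ≥ 0, with
    B = ∏ᵢ [cᵢ − rᵢ, cᵢ + rᵢ],
    {b + Σᵢ wᵢ xᵢ | x ∈ B} =
      [b + Σᵢ wᵢ cᵢ − Σᵢ |wᵢ| rᵢ, b + Σᵢ wᵢ cᵢ + Σᵢ |wᵢ| rᵢ];
    in particular, linear operations admit a complete approximation on the
    reduced affine form abstraction of a hyperrectangle, whose concretization
    interval is exactly the right-hand side. -/
theorem linear_over_box_exact {n : ℕ} (w : Fin n → ℝ) (b : ℝ)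
    (c r : Fin n → ℝ) (hr : ∀ i, 0 ≤ r i) :
    {y : ℝ | ∃ x : Fin n → ℝ,
        (∀ i : Fin n, x i ∈ Set.Icc (c i - r i) (c i + r i)) ∧
        y = b + ∑ i : Fin n, w i * x i} =
      Set.Icc (b + ∑ i : Fin n, w i * c i - ∑ i : Fin n, |w i| * r i)
              (b + ∑ i : Fin n, w i * c i + ∑ i : Fin n, |w i| * r i) := by
  have hS0 : 0 ≤ ∑ i : Fin n, |w i| * r i :=
    Finset.sum_nonneg fun i _ => mul_nonneg (abs_nonneg _) (hr i)
  ext y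
  simp only [Set.mem_setOf_eq, Set.mem_Icc]
  constructor
  · rintro ⟨x, hx, rfl⟩
    have key : |∑ i : Fin n, w i * x i - ∑ i : Fin n, w i * c i|
        ≤ ∑ i : Fin n, |w i| * r i := by
      rw [← Finset.sum_sub_distrib]
      refine (Finset.abs_sum_le_sum_abs _ _).trans ?_
      refine Finset.sum_le_sum fun i _ => ?_
      rw [← mul_sub, abs_mul]
      exact mul_le_mul_of_nonneg_left
        (abs_le.2 ⟨by linarith [(hx i).1], by linarith [(hx i).2]⟩) (abs_nonneg _)
    rw [abs_le] at key
    exact ⟨by linarith [key.1], by linarith [key.2]⟩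
  · rintro ⟨h1, h2⟩
    set S := ∑ i : Fin n, |w i| * r i with hS
    set s := y - (b + ∑ i : Fin n, w i * c i) with hs
    have hsle : |s| ≤ S := abs_le.2 ⟨by linarith, by linarith⟩
    rcases eq_or_lt_of_le hS0 with hz | hSpos
    · refine ⟨c, fun i => ⟨by linarith [hr i], by linarith [hr i]⟩, ?_⟩
      have hs0 : s = 0 := abs_eq_zero.1 (le_antisymm (by rw [← hz] at hsle; exact hsle) (abs_nonneg _))
      rw [hs] at hs0; linarith
    · set t := s / S with ht
      have htle : |t| ≤ 1 := by
        rw [ht, abs_div, abs_of_pos hSpos]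
        exact div_le_one_of_le₀ hsle (le_of_lt hSpos)
      set σ : Fin n → ℝ := fun i => if 0 ≤ w i then 1 else -1 with hσ
      have hσabs : ∀ i, |σ i| = 1 := by
        intro i; simp only [hσ]; split <;> simp
      have hwσ : ∀ i, w i * σ i = |w i| := by
        intro i; simp only [hσ]; split
        · rw [abs_of_nonneg (by assumption)]; ring
        · rw [abs_of_neg (lt_of_not_ge (by assumption))]; ring
      refine ⟨fun i => c i + t * σ i * r i, fun i => ?_, ?_⟩
      · have habs : |t * σ i * r i| ≤ r i := by
          rw [abs_mul, abs_mul, hσabs i, abs_of_nonneg (hr i)]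
          nlinarith [abs_nonneg t, hr i]
        rw [abs_le] at habs
        simp only
        constructor <;> [linarith [habs.1]; linarith [habs.2]]
      · have hsum : ∑ i : Fin n, w i * (c i + t * σ i * r i)
            = ∑ i : Fin n, w i * c i + t * S := by
          rw [hS, Finset.mul_sum, ← Finset.sum_add_distrib]
          refine Finset.sum_congr rfl fun i _ => ?_
          rw [← hwσ i]; ring
        rw [hsum]
        have : t * S = s := by rw [ht]; field_simp
        rw [this, hs]; ring
end
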